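/- Let B be a real p×q matrix and n ≥ 1. If x ∈ ℝ^p and y ∈ ℝ^q satisfy B y = λ x and Bᵀ x = λ y (i.e., (x,y) is an eigenvector of the block matrix [[0, B],[Bᵀ, 0]] with eigenvalue λ), then the vector v indexed by Fin p ⊕ (Fin n × Fin q), with v(inl i) = √n · x i and v(inr (k,j)) = y j for all k, satisfies C · v = (√n · λ) · v. -/

import Mathlib

/-! On vectors that repeat one block `w` in all `n` lower slots, `C` acts as the
`2 × 2` block matrix `[[0, n • B], [Bᵀ, 0]]`. Scaling the upper block of the eigenvector
by `√n` splits the factor `n` evenly between the two block equations, giving eigenvalue `√n λ`. -/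

open Matrix

/-- The matrix `C` of Construction I: indexed by `Fin p ⊕ (Fin n × Fin q)`,
first block row `[0, B, B, …, B]`, first block column its transpose, other blocks zero. -/
def matC (p q n : ℕ) (B : Matrix (Fin p) (Fin q) ℝ) :
    Matrix (Fin p ⊕ Fin n × Fin q) (Fin p ⊕ Fin n × Fin q) ℝ :=
  Matrix.of fun a b =>
    match a, b with
    | Sum.inl i, Sum.inr (_, j) => B i j
    | Sum.inr (_, j), Sum.inl i => B i j
    | _, _ => 0

theorem matC_mulVec_inl {p q n : ℕ} (B : Matrix (Fin p) (Fin q) ℝ)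
    (v : Fin p ⊕ Fin n × Fin q → ℝ) (i : Fin p) :
    (matC p q n B *ᵥ v) (Sum.inl i) = ∑ k, (B *ᵥ fun j => v (Sum.inr (k, j))) i := by
  simp [mulVec, dotProduct, matC, Fintype.sum_sum_type, Fintype.sum_prod_type]

theorem matC_mulVec_inr {p q n : ℕ} (B : Matrix (Fin p) (Fin q) ℝ)
    (v : Fin p ⊕ Fin n × Fin q → ℝ) (k : Fin n) (j : Fin q) :
    (matC p q n B *ᵥ v) (Sum.inr (k, j)) = (Bᵀ *ᵥ fun i => v (Sum.inl i)) j := by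
  simp [mulVec, dotProduct, matC, Fintype.sum_sum_type]

theorem matC_mulVec_sum_elim {p q n : ℕ} (B : Matrix (Fin p) (Fin q) ℝ)
    (u : Fin p → ℝ) (w : Fin q → ℝ) :
    matC p q n B *ᵥ Sum.elim u (fun kj => w kj.2) =
      Sum.elim ((n : ℝ) • (B *ᵥ w)) (fun kj => (Bᵀ *ᵥ u) kj.2) := by
  funext a
  rcases a with i | ⟨k, j⟩
  · simp [matC_mulVec_inl, nsmul_eq_mul]
  · simp [matC_mulVec_inr]

theorem matC_eigenvector (p q n : ℕ) (B : Matrix (Fin p) (Fin q) ℝ)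
    (x : Fin p → ℝ) (y : Fin q → ℝ) (l : ℝ)
    (hBy : B *ᵥ y = l • x) (hBTx : Bᵀ *ᵥ x = l • y) :
    matC p q n B *ᵥ Sum.elim (fun i => Real.sqrt n * x i) (fun kj => y kj.2) =
      (Real.sqrt n * l) • Sum.elim (fun i => Real.sqrt n * x i) (fun kj => y kj.2) := by
  have hsq : Real.sqrt n * Real.sqrt n = (n : ℝ) := Real.mul_self_sqrt n.cast_nonneg
  have hBTsx : Bᵀ *ᵥ (fun i => Real.sqrt n * x i) = (Real.sqrt n * l) • y := by
    rw [show (fun i => Real.sqrt n * x i) = Real.sqrt n • x from rfl, mulVec_smul, hBTx,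
      smul_smul]
  rw [matC_mulVec_sum_elim, hBy, hBTsx]
  funext a
  rcases a with i | kj
  · simp only [Sum.elim_inl, Pi.smul_apply, smul_eq_mul]
    linear_combination (l * x i) * hsq.symm
  · rfl
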